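/- Let F be an n×n real column-stochastic matrix and k₀ ≥ 1 an integer such that every entry of F^{k₀} is strictly positive; set g = ∑_{i=1}^n min_j (F^{k₀})_{ij} and assume g < 1. Fix two distinct indices h₀ and l₀, a vector x ∈ ℝⁿ, and ε > 0, and define x_ε = x − ε e_{h₀} + ε e_{l₀}, where e_i are the standard basis vectors. Let β = max{ ‖F^r (e_{l₀} − e_{h₀})‖₁ : 0 ≤ r ≤ k₀ − 1 } and γ₀ = ε β / (1 − g)^{1 − 1/k₀}. Then for every integer k ≥ 0, ‖F^k x_ε − F^k x‖₁ ≤ γ₀ ((1 − g)^{1/k₀})^k; in particular F^k x_ε − F^k x → 0 as k → ∞. -/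
import Mathlib


open Matrix Finset Filter Topology

private lemma pow_entry_nonneg' {n : ℕ} (F : Matrix (Fin n) (Fin n) ℝ)
    (hF : ∀ i j, 0 ≤ F i j) (k : ℕ) : ∀ i j, 0 ≤ (F ^ k) i j := by
  induction k with
  | zero =>
    intro i j; rw [pow_zero]
    by_cases h : i = j <;> simp [Matrix.one_apply, h]
  | succ k ih =>
    intro i j
    rw [pow_succ, Matrix.mul_apply]
    exact Finset.sum_nonneg fun l _ => mul_nonneg (ih i l) (hF l j)

private lemma pow_col_sum' {n : ℕ} (F : Matrix (Fin n) (Fin n) ℝ)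
    (hcol : ∀ j, ∑ i, F i j = 1) (k : ℕ) : ∀ j, ∑ i, (F ^ k) i j = 1 := by
  induction k with
  | zero => intro j; simp [Matrix.one_apply]
  | succ k ih =>
    intro j
    simp only [pow_succ, Matrix.mul_apply]
    rw [Finset.sum_comm]
    calc ∑ l, ∑ i, (F ^ k) i l * F l j
        = ∑ l, (∑ i, (F ^ k) i l) * F l j := by simp [Finset.sum_mul]
      _ = ∑ l, F l j := by simp [ih]
      _ = 1 := hcol j

private lemma mulVec_sum_eq' {n : ℕ} (A : Matrix (Fin n) (Fin n) ℝ)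
    (hcol : ∀ j, ∑ i, A i j = 1) (u : Fin n → ℝ) :
    ∑ i, A.mulVec u i = ∑ j, u j := by
  simp only [Matrix.mulVec, dotProduct]
  rw [Finset.sum_comm]
  refine Finset.sum_congr rfl fun j _ => ?_
  rw [← Finset.sum_mul, hcol j, one_mul]

private lemma contraction_step' {n : ℕ} (A : Matrix (Fin n) (Fin n) ℝ)
    (hcol : ∀ j, ∑ i, A i j = 1)
    (g : ℝ) (hg : g = ∑ i, ⨅ j, A i j) (u : Fin n → ℝ) (hu : ∑ j, u j = 0) :
    ∑ i, |A.mulVec u i| ≤ (1 - g) * ∑ j, |u j| := by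
  have hm : ∀ i j, (⨅ j', A i j') ≤ A i j := fun i j =>
    ciInf_le (Set.Finite.bddBelow (Set.finite_range _)) j
  have key : ∀ i, |A.mulVec u i| ≤ ∑ j, (A i j - ⨅ j', A i j') * |u j| := by
    intro i
    have h1 : A.mulVec u i = ∑ j, (A i j - ⨅ j', A i j') * u j := by
      simp only [Matrix.mulVec, dotProduct, sub_mul, Finset.sum_sub_distrib,
        ← Finset.mul_sum, hu, mul_zero, sub_zero]
    rw [h1]
    refine (Finset.abs_sum_le_sum_abs _ _).trans ?_
    refine Finset.sum_le_sum fun j _ => ?_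
    rw [abs_mul, abs_of_nonneg (sub_nonneg.mpr (hm i j))]
  calc ∑ i, |A.mulVec u i| ≤ ∑ i, ∑ j, (A i j - ⨅ j', A i j') * |u j| :=
        Finset.sum_le_sum fun i _ => key i
    _ = ∑ j, (1 - g) * |u j| := by
        rw [Finset.sum_comm]
        refine Finset.sum_congr rfl fun j _ => ?_
        rw [← Finset.sum_mul, Finset.sum_sub_distrib, hcol j, hg]
    _ = (1 - g) * ∑ j, |u j| := by rw [Finset.mul_sum]

private lemma contraction_iter' {n : ℕ} (A : Matrix (Fin n) (Fin n) ℝ)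
    (hcol : ∀ j, ∑ i, A i j = 1)
    (g : ℝ) (hg : g = ∑ i, ⨅ j, A i j) (hg' : 0 ≤ 1 - g)
    (q : ℕ) (u : Fin n → ℝ) (hu : ∑ j, u j = 0) :
    ∑ i, |(A ^ q).mulVec u i| ≤ (1 - g) ^ q * ∑ j, |u j| := by
  induction q generalizing u with
  | zero => simp [Matrix.one_mulVec]
  | succ q ih =>
    rw [pow_succ, ← Matrix.mulVec_mulVec]
    calc ∑ i, |(A ^ q).mulVec (A.mulVec u) i|
        ≤ (1 - g) ^ q * ∑ j, |A.mulVec u j| := by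
          refine ih _ ?_
          rw [mulVec_sum_eq' A hcol u, hu]
      _ ≤ (1 - g) ^ q * ((1 - g) * ∑ j, |u j|) :=
          mul_le_mul_of_nonneg_left (contraction_step' A hcol g hg u hu)
            (pow_nonneg hg' q)
      _ = (1 - g) ^ (q + 1) * ∑ j, |u j| := by ring

/-- The ε-support method in a cohesive society. Transferring an amount
`ε` from a wealthy agent `h₀` to a poor agent `l₀` changes the wealth vector from `x`
to `x_ε = x - ε e_{h₀} + ε e_{l₀}`, and then
`‖F^k x_ε - F^k x‖₁ ≤ γ₀ ((1-g)^{1/k₀})^k`; in particular `F^k x_ε - F^k x → 0`. -/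
theorem epsilon_support_method (n : ℕ)
    (F : Matrix (Fin n) (Fin n) ℝ)
    (hF : ∀ i j, 0 ≤ F i j) (hcol : ∀ j, ∑ i, F i j = 1)
    (k₀ : ℕ) (hk₀ : 1 ≤ k₀)
    (hprim : ∀ i j, 0 < (F ^ k₀) i j)
    (g : ℝ) (hg : g = ∑ i, ⨅ j, (F ^ k₀) i j) (hg1 : g < 1)
    (h₀ l₀ : Fin n) (hne : h₀ ≠ l₀)
    (x : Fin n → ℝ) (ε : ℝ) (hε : 0 < ε)
    (xε : Fin n → ℝ)
    (hxε : xε = x - ε • (Pi.single h₀ 1 : Fin n → ℝ) + ε • (Pi.single l₀ 1 : Fin n → ℝ))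
    (β : ℝ)
    (hβ : β = (Finset.range k₀).sup' (Finset.nonempty_range_iff.mpr (by omega))
      (fun r => ∑ i, |(F ^ r).mulVec ((Pi.single l₀ 1 : Fin n → ℝ) - (Pi.single h₀ 1 : Fin n → ℝ)) i|))
    (γ₀ : ℝ) (hγ₀ : γ₀ = ε * β / (1 - g) ^ ((1 : ℝ) - 1 / (k₀ : ℝ))) :
    (∀ k : ℕ, ∑ i, |(F ^ k).mulVec xε i - (F ^ k).mulVec x i| ≤
        γ₀ * ((1 - g) ^ ((1 : ℝ) / (k₀ : ℝ))) ^ k) ∧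
      Filter.Tendsto (fun k : ℕ => (F ^ k).mulVec xε - (F ^ k).mulVec x)
        Filter.atTop (nhds (0 : Fin n → ℝ)) := by
  haveI : Nonempty (Fin n) := ⟨h₀⟩
  set d : Fin n → ℝ :=
    (Pi.single l₀ 1 : Fin n → ℝ) - (Pi.single h₀ 1 : Fin n → ℝ) with hd
  -- basic positivity facts
  have hg0 : 0 < g := by
    rw [hg]
    refine Finset.sum_pos (fun i _ => ?_) univ_nonempty
    obtain ⟨j, hj⟩ := exists_eq_ciInf_of_finite (f := fun j => (F ^ k₀) i j)
    rw [← hj]; exact hprim i j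
  have ht : (0:ℝ) < 1 - g := by linarith
  have ht1 : 1 - g < 1 := by linarith
  have hk₀R : (0:ℝ) < (k₀:ℝ) := by exact_mod_cast hk₀
  -- sum of d is zero
  have hsumd : ∑ j, d j = 0 := by
    simp [hd, Finset.sum_sub_distrib]
  -- the difference vector
  have hdiff : ∀ k : ℕ, (F ^ k).mulVec xε - (F ^ k).mulVec x = ε • (F ^ k).mulVec d := by
    intro k
    have hx' : xε = x + ε • d := by
      rw [hxε, hd]; module
    rw [hx', Matrix.mulVec_add, Matrix.mulVec_smul]
    abel
  have hdiff' : ∀ k : ℕ, ∀ i, (F ^ k).mulVec xε i - (F ^ k).mulVec x i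
      = ε * (F ^ k).mulVec d i := by
    intro k i
    have := congrFun (hdiff k) i
    simpa using this
  -- β bounds
  have hβle : ∀ r : ℕ, r < k₀ → ∑ i, |(F ^ r).mulVec d i| ≤ β := by
    intro r hr
    rw [hβ]
    exact Finset.le_sup' (fun r => ∑ i, |(F ^ r).mulVec d i|) (Finset.mem_range.mpr hr)
  have hβ0 : 0 ≤ β :=
    le_trans (Finset.sum_nonneg fun i _ => abs_nonneg _) (hβle 0 (by omega))
  -- the main bound
  have main : ∀ k : ℕ, ∑ i, |(F ^ k).mulVec xε i - (F ^ k).mulVec x i| ≤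
      γ₀ * ((1 - g) ^ ((1 : ℝ) / (k₀ : ℝ))) ^ k := by
    intro k
    set q := k / k₀ with hq
    set r := k % k₀ with hr
    have hrlt : r < k₀ := Nat.mod_lt _ (by omega)
    have hk : k = k₀ * q + r := (Nat.div_add_mod k k₀).symm
    -- rewrite F^k
    have hFk : (F ^ k) = (F ^ k₀) ^ q * F ^ r := by
      rw [hk, pow_add, pow_mul]
    -- ℓ¹ norm of F^k d
    have hS : ∑ i, |(F ^ k).mulVec d i| ≤ (1 - g) ^ q * β := by
      rw [hFk, ← Matrix.mulVec_mulVec]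
      calc ∑ i, |((F ^ k₀) ^ q).mulVec ((F ^ r).mulVec d) i|
          ≤ (1 - g) ^ q * ∑ j, |(F ^ r).mulVec d j| :=
            contraction_iter' (F ^ k₀) (pow_col_sum' F hcol k₀) g hg ht.le q _
              (by rw [mulVec_sum_eq' _ (pow_col_sum' F hcol r) d, hsumd])
        _ ≤ (1 - g) ^ q * β :=
            mul_le_mul_of_nonneg_left (hβle r hrlt) (pow_nonneg ht.le q)
    -- identify the RHS
    have hRHS : γ₀ * ((1 - g) ^ ((1 : ℝ) / (k₀ : ℝ))) ^ k
        = ε * β * (1 - g) ^ ((k:ℝ)/(k₀:ℝ) - (1 - 1/(k₀:ℝ))) := by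
      rw [hγ₀]
      have h1 : (1 - g) ^ ((k:ℝ)/(k₀:ℝ) - (1 - 1/(k₀:ℝ)))
          = (1 - g) ^ ((1:ℝ)/(k₀:ℝ) * (k:ℕ)) / (1 - g) ^ ((1:ℝ) - 1/(k₀:ℝ)) := by
        rw [Real.rpow_sub ht]; congr 1; ring
      rw [h1, Real.rpow_mul ht.le, Real.rpow_natCast]
      exact (div_mul_eq_mul_div _ _ _).trans (mul_div_assoc _ _ _)
    have hexp : (1 - g) ^ q ≤ (1 - g) ^ ((k:ℝ)/(k₀:ℝ) - (1 - 1/(k₀:ℝ))) := by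
      rw [← Real.rpow_natCast (1 - g) q]
      apply Real.rpow_le_rpow_of_exponent_ge ht ht1.le
      have hkR : (k:ℝ) = (k₀:ℝ) * q + r := by exact_mod_cast hk
      have hrR : (r:ℝ) + 1 ≤ (k₀:ℝ) := by exact_mod_cast hrlt
      have hinv : (1/(k₀:ℝ)) * (k₀:ℝ) = 1 := by field_simp
      rw [sub_le_iff_le_add, div_le_iff₀ hk₀R]
      nlinarith [hrR, hkR, hinv]
    calc ∑ i, |(F ^ k).mulVec xε i - (F ^ k).mulVec x i|
        = ε * ∑ i, |(F ^ k).mulVec d i| := by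
          rw [Finset.mul_sum]
          refine Finset.sum_congr rfl fun i _ => ?_
          rw [hdiff' k i, abs_mul, abs_of_pos hε]
      _ ≤ ε * ((1 - g) ^ q * β) := by
          exact mul_le_mul_of_nonneg_left hS hε.le
      _ = ε * β * (1 - g) ^ q := by ring
      _ ≤ ε * β * (1 - g) ^ ((k:ℝ)/(k₀:ℝ) - (1 - 1/(k₀:ℝ))) :=
          mul_le_mul_of_nonneg_left hexp (mul_nonneg hε.le hβ0)
      _ = γ₀ * ((1 - g) ^ ((1 : ℝ) / (k₀ : ℝ))) ^ k := hRHS.symm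
  refine ⟨main, ?_⟩
  -- convergence
  have hlam0 : 0 ≤ (1 - g) ^ ((1 : ℝ) / (k₀ : ℝ)) := Real.rpow_nonneg ht.le _
  have hlam1 : (1 - g) ^ ((1 : ℝ) / (k₀ : ℝ)) < 1 :=
    Real.rpow_lt_one ht.le ht1 (by positivity)
  have hgeo : Tendsto (fun k : ℕ => γ₀ * ((1 - g) ^ ((1 : ℝ) / (k₀ : ℝ))) ^ k)
      atTop (nhds 0) := by
    have h := tendsto_pow_atTop_nhds_zero_of_lt_one hlam0 hlam1
    simpa using h.const_mul γ₀
  rw [tendsto_pi_nhds]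
  intro i
  simp only [Pi.zero_apply]
  refine squeeze_zero_norm (fun k => ?_) hgeo
  have h1 : ‖((F ^ k).mulVec xε - (F ^ k).mulVec x) i‖
      = |(F ^ k).mulVec xε i - (F ^ k).mulVec x i| := by
    simp [Real.norm_eq_abs]
  rw [h1]
  exact le_trans
    (Finset.single_le_sum (f := fun j => |(F ^ k).mulVec xε j - (F ^ k).mulVec x j|)
      (fun j _ => abs_nonneg _) (Finset.mem_univ i))
    (main k)
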